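/- Let X ⊆ ℝⁿ be a nonempty compact convex set and let f₁,…,f_m : ℝⁿ → ℝ be convex functions. Let (x_k) be a sequence in X such that for every k, x_{k+1} minimizes f₁(x) + … + f_m(x) over the set X_k = {x ∈ X : fᵢ(x) ≤ fᵢ(x_k) for all i = 1,…,m}. Then every limit point x* of the sequence (x_k) is a Pareto minimizer of f = (f₁,…,f_m) on X. -/

import Mathlib

/-!
The values `fᵢ(x_k)` are nonincreasing in `k`, so by continuity of the convex `fᵢ` the limit point
satisfies `fᵢ(x*) ≤ fᵢ(x_k)` for every `k`. Hence every `y ∈ X` with `fᵢ(y) ≤ fᵢ(x*)` for all `i`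
is feasible for the first step, giving `∑ fᵢ(x*) ≤ ∑ fᵢ(x₁) ≤ ∑ fᵢ(y)`; a point that Pareto
dominated `x*` would make the left-hand side strictly larger than the right.
-/

open Filter Topology

def IsParetoMinOn {ι α β : Type*} [Preorder β] (f : ι → α → β) (X : Set α) (a : α) : Prop :=
  a ∈ X ∧ ¬ ∃ y ∈ X, (∀ i, f i y ≤ f i a) ∧ ∃ r, f r y < f r a

theorem isParetoMinOn_of_sum_le {ι α β : Type*} [Fintype ι] [AddCommMonoid β] [PartialOrder β]
    [IsOrderedCancelAddMonoid β] {f : ι → α → β} {X : Set α} {a : α} (ha : a ∈ X)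
    (hmin : ∀ y ∈ X, (∀ i, f i y ≤ f i a) → ∑ i, f i a ≤ ∑ i, f i y) :
    IsParetoMinOn f X a := by
  refine ⟨ha, fun ⟨y, hyX, hle, r, hlt⟩ => ?_⟩
  have hsum_lt : ∑ i, f i y < ∑ i, f i a :=
    Finset.sum_lt_sum (fun i _ => hle i) ⟨r, Finset.mem_univ r, hlt⟩
  exact (hsum_lt.trans_le (hmin y hyX hle)).false

theorem Antitone.le_of_tendsto_subseq {α β : Type*} [TopologicalSpace α] [TopologicalSpace β]
    [Preorder β] [OrderClosedTopology β] {g : α → β} {u : ℕ → α} (hu : Antitone (g ∘ u))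
    {φ : ℕ → ℕ} (hφ : StrictMono φ) {a : α} (hg : ContinuousAt g a)
    (ha : Tendsto (u ∘ φ) atTop (𝓝 a)) (k : ℕ) : g a ≤ g (u k) :=
  calc g a ≤ g (u (φ k)) := (hu.comp_monotone hφ.monotone).le_of_tendsto (hg.tendsto.comp ha) k
    _ ≤ g (u k) := hu hφ.le_apply

theorem cc1_limit_points_are_pareto_general {n m : ℕ}
    (X : Set (EuclideanSpace ℝ (Fin n)))
    (hXcomp : IsCompact X)
    (f : Fin m → EuclideanSpace ℝ (Fin n) → ℝ)
    (hf : ∀ i, ConvexOn ℝ Set.univ (f i))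
    (x : ℕ → EuclideanSpace ℝ (Fin n))
    (hxX : ∀ k, x k ∈ X)
    (hstep : ∀ k, x (k + 1) ∈ {x' ∈ X | ∀ i, f i x' ≤ f i (x k)} ∧
      ∀ x' ∈ {x' ∈ X | ∀ i, f i x' ≤ f i (x k)}, ∑ i, f i (x (k + 1)) ≤ ∑ i, f i x')
    (xstar : EuclideanSpace ℝ (Fin n))
    (hlimpt : ∃ φ : ℕ → ℕ, StrictMono φ ∧
      Filter.Tendsto (fun j => x (φ j)) Filter.atTop (nhds xstar)) :
    xstar ∈ X ∧ ¬ ∃ x' ∈ X, (∀ i, f i x' ≤ f i xstar) ∧ (∃ r, f r x' < f r xstar) := by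
  obtain ⟨φ, hφ, htend⟩ := hlimpt
  have hmem : xstar ∈ X := hXcomp.isClosed.mem_of_tendsto htend (.of_forall fun j => hxX (φ j))
  have hcont (i) : Continuous (f i) := continuousOn_univ.mp ((hf i).continuousOn isOpen_univ)
  have hlimit_le (i k) : f i xstar ≤ f i (x k) :=
    Antitone.le_of_tendsto_subseq (antitone_nat_of_succ_le fun k => (hstep k).1.2 i) hφ
      (hcont i).continuousAt htend k
  refine isParetoMinOn_of_sum_le hmem fun y hyX hy => ?_
  calc ∑ i, f i xstar ≤ ∑ i, f i (x 1) := Finset.sum_le_sum fun i _ => hlimit_le i 1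
    _ ≤ ∑ i, f i y := (hstep 0).2 y ⟨hyX, fun i => (hy i).trans (hlimit_le i 0)⟩

/-- Convergence of the Charnes–Cooper algorithm CC1: if each iterate
`x_{k+1}` minimizes `∑ i, f i x` over `X_k = {x ∈ X : fᵢ(x) ≤ fᵢ(x_k) ∀ i}`, then every limit
point of the sequence `(x_k)` is a Pareto minimizer of `f` on `X`. -/
theorem cc1_limit_points_are_pareto {n m : ℕ}
    (X : Set (EuclideanSpace ℝ (Fin n)))
    (hXne : X.Nonempty) (hXcomp : IsCompact X) (hXconv : Convex ℝ X)
    (f : Fin m → EuclideanSpace ℝ (Fin n) → ℝ)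
    (hf : ∀ i, ConvexOn ℝ Set.univ (f i))
    (x : ℕ → EuclideanSpace ℝ (Fin n))
    (hxX : ∀ k, x k ∈ X)
    (hstep : ∀ k, x (k + 1) ∈ {x' ∈ X | ∀ i, f i x' ≤ f i (x k)} ∧
      ∀ x' ∈ {x' ∈ X | ∀ i, f i x' ≤ f i (x k)}, ∑ i, f i (x (k + 1)) ≤ ∑ i, f i x')
    (xstar : EuclideanSpace ℝ (Fin n))
    (hlimpt : ∃ φ : ℕ → ℕ, StrictMono φ ∧
      Filter.Tendsto (fun j => x (φ j)) Filter.atTop (nhds xstar)) :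
    xstar ∈ X ∧ ¬ ∃ x' ∈ X, (∀ i, f i x' ≤ f i xstar) ∧ (∃ r, f r x' < f r xstar) :=
  cc1_limit_points_are_pareto_general X hXcomp f hf x hxX hstep xstar hlimpt
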